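/- arXiv:2105.00238 — 2 statements merged into one kernel-verified Lean document; each statement's English description precedes it below -/
import Mathlib

section
/- For any initial point λ⁰ in S³ and parameters satisfying a, b ∈ (0,1], β ∈ (0,1], βq ≤ 1, the second and third coordinates of the trajectory satisfy lim y⁽ⁿ⁾ = lim u⁽ⁿ⁾ = 0. -/
def Simplex3 : Set (ℝ × ℝ × ℝ × ℝ) :=
  {p | 0 ≤ p.1 ∧ 0 ≤ p.2.1 ∧ 0 ≤ p.2.2.1 ∧ 0 ≤ p.2.2.2 ∧
       p.1 + p.2.1 + p.2.2.1 + p.2.2.2 = 1}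

def seirV (a b β q : ℝ) (p : ℝ × ℝ × ℝ × ℝ) : ℝ × ℝ × ℝ × ℝ :=
  (p.1 - β * p.1 * (p.2.2.1 + q * p.2.1),
   p.2.1 - a * p.2.1 + β * p.1 * (p.2.2.1 + q * p.2.1),
   p.2.2.1 - b * p.2.2.1 + a * p.2.1,
   p.2.2.2 + b * p.2.2.1)

/-!
The susceptible fraction `x⁽ⁿ⁾` is nonincreasing and nonnegative, so it converges, and the
infection flux `x⁽ⁿ⁾ - x⁽ⁿ⁺¹⁾ = βx⁽ⁿ⁾(u⁽ⁿ⁾ + qy⁽ⁿ⁾)` tends to `0`. The exposed and infected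
fractions then obey the damped recursions `y⁽ⁿ⁺¹⁾ = (1 - a)y⁽ⁿ⁾ + flux` and
`u⁽ⁿ⁺¹⁾ = (1 - b)u⁽ⁿ⁾ + ay⁽ⁿ⁾` with contraction factors in `[0, 1)` and vanishing forcing,
so `y⁽ⁿ⁾ → 0` and then `u⁽ⁿ⁾ → 0`.
-/

open Filter Topology

theorem tendsto_zero_of_le_mul_add {c : ℝ} (hc0 : 0 ≤ c) (hc1 : c < 1) {z d : ℕ → ℝ}
    (hz : ∀ n, 0 ≤ z n) (hrec : ∀ n, z (n + 1) ≤ c * z n + d n)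
    (hd : Tendsto d atTop (𝓝 0)) : Tendsto z atTop (𝓝 0) := by
  refine tendsto_order.2 ⟨fun e he => .of_forall fun n => he.trans_le (hz n), fun ε hε => ?_⟩
  obtain ⟨N, hN⟩ := eventually_atTop.1 <|
    hd.eventually (gt_mem_nhds (by nlinarith : (0 : ℝ) < (1 - c) * (ε / 2)))
  -- once `d n < (1 - c) ε/2`, the excess of `z` over `ε/2` contracts by the factor `c`
  have hgeom : ∀ m, z (N + m) - ε / 2 ≤ c ^ m * (z N - ε / 2) := fun m =>
    le_geom (u := fun m => z (N + m) - ε / 2) hc0 m fun k _ => by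
      have := hrec (N + k)
      have := hN (N + k) (Nat.le_add_right N k)
      simp only [← add_assoc]
      nlinarith
  have hbound : Tendsto (fun m => ε / 2 + c ^ m * (z N - ε / 2)) atTop (𝓝 (ε / 2)) := by
    simpa using tendsto_const_nhds.add
      ((tendsto_pow_atTop_nhds_zero_of_lt_one hc0 hc1).mul_const (z N - ε / 2))
  obtain ⟨M, hM⟩ := eventually_atTop.1 (hbound.eventually (gt_mem_nhds (half_lt_self hε)))
  refine eventually_atTop.2 ⟨N + M, fun n hn => ?_⟩
  obtain ⟨m, rfl⟩ := Nat.exists_eq_add_of_le (le_trans (Nat.le_add_right N M) hn)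
  linarith [hgeom m, hM m (by omega)]

def seirFlux (β q : ℝ) (p : ℝ × ℝ × ℝ × ℝ) : ℝ :=
  β * p.1 * (p.2.2.1 + q * p.2.1)

section SEIR

variable {a b β q : ℝ}

theorem seirV_fst (p : ℝ × ℝ × ℝ × ℝ) : (seirV a b β q p).1 = p.1 - seirFlux β q p := rfl

theorem seirV_snd (p : ℝ × ℝ × ℝ × ℝ) :
    (seirV a b β q p).2.1 = (1 - a) * p.2.1 + seirFlux β q p := by
  simp only [seirV, seirFlux]; ring

theorem seirV_thd (p : ℝ × ℝ × ℝ × ℝ) :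
    (seirV a b β q p).2.2.1 = (1 - b) * p.2.2.1 + a * p.2.1 := by
  simp only [seirV]; ring

theorem seirFlux_nonneg (hβ : 0 ≤ β) (hq : 0 ≤ q) {p : ℝ × ℝ × ℝ × ℝ} (hp : p ∈ Simplex3) :
    0 ≤ seirFlux β q p :=
  mul_nonneg (mul_nonneg hβ hp.1) (add_nonneg hp.2.2.1 (mul_nonneg hq hp.2.1))

theorem seirFlux_le_fst (hβ1 : β ≤ 1) (hβq : β * q ≤ 1) {p : ℝ × ℝ × ℝ × ℝ}
    (hp : p ∈ Simplex3) : seirFlux β q p ≤ p.1 := by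
  obtain ⟨hx, hy, hu, hv, hsum⟩ := hp
  have hrate : β * (p.2.2.1 + q * p.2.1) ≤ 1 := by nlinarith
  calc seirFlux β q p = p.1 * (β * (p.2.2.1 + q * p.2.1)) := by unfold seirFlux; ring
    _ ≤ p.1 * 1 := mul_le_mul_of_nonneg_left hrate hx
    _ = p.1 := mul_one _

theorem mapsTo_seirV (ha : 0 ≤ a) (ha1 : a ≤ 1) (hb : 0 ≤ b) (hb1 : b ≤ 1) (hβ : 0 ≤ β)
    (hβ1 : β ≤ 1) (hq : 0 ≤ q) (hβq : β * q ≤ 1) :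
    Set.MapsTo (seirV a b β q) Simplex3 Simplex3 := by
  intro p hp
  have hflux := seirFlux_nonneg hβ hq hp
  have hflux_le := seirFlux_le_fst hβ1 hβq hp
  obtain ⟨hx, hy, hu, hv, hsum⟩ := hp
  refine ⟨?_, ?_, ?_, ?_, ?_⟩
  · rw [seirV_fst]; linarith
  · rw [seirV_snd]; nlinarith
  · rw [seirV_thd]; nlinarith
  · simp only [seirV]; nlinarith
  · simp only [seirV]; linarith

theorem tendsto_seirFlux_iterate (hβ : 0 ≤ β) (hq : 0 ≤ q) {p : ℕ → ℝ × ℝ × ℝ × ℝ}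
    (hp : ∀ n, p n ∈ Simplex3) (hstep : ∀ n, p (n + 1) = seirV a b β q (p n)) :
    Tendsto (fun n => seirFlux β q (p n)) atTop (𝓝 0) := by
  have hanti : Antitone fun n => (p n).1 := antitone_nat_of_succ_le fun n => by
    rw [hstep, seirV_fst]
    linarith [seirFlux_nonneg hβ hq (hp n)]
  have hconv := tendsto_atTop_ciInf hanti ⟨0, by rintro _ ⟨n, rfl⟩; exact (hp n).1⟩
  simpa [hstep, seirV_fst] using hconv.sub (hconv.comp (tendsto_add_atTop_nat 1))

end SEIR

theorem stmt_5 (a b β q : ℝ) (ha : 0 < a) (ha1 : a ≤ 1) (hb : 0 < b) (hb1 : b ≤ 1)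
    (hβ : 0 < β) (hβ1 : β ≤ 1) (hq : 0 ≤ q) (hβq : β * q ≤ 1)
    (lam0 : ℝ × ℝ × ℝ × ℝ) (hlam : lam0 ∈ Simplex3) :
    Filter.Tendsto (fun n => ((seirV a b β q)^[n] lam0).2.1) Filter.atTop (nhds 0) ∧
    Filter.Tendsto (fun n => ((seirV a b β q)^[n] lam0).2.2.1) Filter.atTop (nhds 0) := by
  have hmem : ∀ n, (seirV a b β q)^[n] lam0 ∈ Simplex3 := fun n =>
    (mapsTo_seirV ha.le ha1 hb.le hb1 hβ.le hβ1 hq hβq).iterate n hlam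
  have hstep : ∀ n, (seirV a b β q)^[n + 1] lam0 = seirV a b β q ((seirV a b β q)^[n] lam0) :=
    fun n => Function.iterate_succ_apply' _ n lam0
  have hy : Tendsto (fun n => ((seirV a b β q)^[n] lam0).2.1) atTop (𝓝 0) :=
    tendsto_zero_of_le_mul_add (by linarith) (by linarith) (fun n => (hmem n).2.1)
      (fun n => (hstep n ▸ seirV_snd _).le) (tendsto_seirFlux_iterate hβ.le hq hmem hstep)
  exact ⟨hy, tendsto_zero_of_le_mul_add (by linarith) (by linarith) (fun n => (hmem n).2.2.1)
    (fun n => (hstep n ▸ seirV_thd _).le) (by simpa using hy.const_mul a)⟩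
end

section
/- Assume a, b, β ∈ (0,1], β > 0, q ≥ 0, βq ≤ 1. For any non-fixed initial point λ⁰ ∈ S³, the trajectory Vⁿ(λ⁰) converges to a point (x̄, 0, 0, 1-x̄) with x̄ < ab/(β(a+bq)). -/
/-!
The susceptible share `x` decreases and the removed share `w` increases along a trajectory, so
both converge. Since `w' - w = b u`, the share `u` tends to `0`, and then `u' - u + b u = a y`
forces `y → 0`; the limit is `(x̄, 0, 0, 1 - x̄)`. If `x̄ ≥ ab / (β (a + b q))`, then
`L = b y + β x̄ u` is nondecreasing along the trajectory (because `x ≥ x̄` throughout) and tends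
to `0`, so `L = 0` at the start: the initial point has `y = u = 0` and is fixed.
-/

open Filter Topology Set

theorem Filter.Tendsto.succ_sub {G : Type*} [AddCommGroup G] [TopologicalSpace G]
    [IsTopologicalAddGroup G] {f : ℕ → G} {l : G} (hf : Tendsto f atTop (𝓝 l)) :
    Tendsto (fun n => f (n + 1) - f n) atTop (𝓝 0) := by
  simpa using ((tendsto_add_atTop_iff_nat 1).2 hf).sub hf

section SEIR

variable {a b β q : ℝ} {p : ℝ × ℝ × ℝ × ℝ}

theorem seirV_mapsTo (ha : 0 ≤ a) (ha1 : a ≤ 1) (hb : 0 ≤ b) (hb1 : b ≤ 1)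
    (hβ : 0 ≤ β) (hβ1 : β ≤ 1) (hq : 0 ≤ q) (hβq : β * q ≤ 1) :
    MapsTo (seirV a b β q) Simplex3 Simplex3 := by
  rintro p ⟨hx, hy, hu, hw, hsum⟩
  refine ⟨?_, ?_, ?_, ?_, ?_⟩ <;> simp only [seirV]
  · -- `x' = x (1 - y - u) + (1 - β) x u + (1 - β q) x y`
    nlinarith [mul_nonneg (sub_nonneg.2 hβ1) (mul_nonneg hx hu),
      mul_nonneg (sub_nonneg.2 hβq) (mul_nonneg hx hy),
      mul_nonneg hx (by linarith : 0 ≤ 1 - p.2.1 - p.2.2.1)]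
  · nlinarith [mul_nonneg (mul_nonneg hβ hx) hu,
      mul_nonneg (mul_nonneg (mul_nonneg hβ hx) hq) hy, mul_nonneg hy (sub_nonneg.2 ha1)]
  · nlinarith [mul_nonneg hu (sub_nonneg.2 hb1), mul_nonneg ha hy]
  · linarith [mul_nonneg hb hu]
  · linarith

theorem seirV_fst_le (hβ : 0 ≤ β) (hq : 0 ≤ q) (hp : p ∈ Simplex3) :
    (seirV a b β q p).1 ≤ p.1 := by
  obtain ⟨hx, hy, hu, -⟩ := hp
  have : 0 ≤ β * p.1 * (p.2.2.1 + q * p.2.1) := by positivity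
  simp only [seirV]
  linarith

theorem le_seirV_snd_snd_snd (hb : 0 ≤ b) (hp : p ∈ Simplex3) :
    p.2.2.2 ≤ (seirV a b β q p).2.2.2 := by
  have : 0 ≤ b * p.2.2.1 := mul_nonneg hb hp.2.2.1
  simp only [seirV]
  linarith

theorem seirV_eq_self (hy : p.2.1 = 0) (hu : p.2.2.1 = 0) : seirV a b β q p = p := by
  obtain ⟨x, y, u, w⟩ := p
  simp_all [seirV]

theorem tendsto_iterate_seirV (ha : 0 < a) (hb : 0 < b) (hβ : 0 ≤ β) (hq : 0 ≤ q)
    (hmem : ∀ n, (seirV a b β q)^[n] p ∈ Simplex3) :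
    ∃ xbar : ℝ, (∀ n, xbar ≤ ((seirV a b β q)^[n] p).1) ∧
      Tendsto (fun n => (seirV a b β q)^[n] p) atTop (𝓝 (xbar, 0, 0, 1 - xbar)) := by
  set V := seirV a b β q
  have hsucc (n : ℕ) : V^[n + 1] p = V (V^[n] p) := Function.iterate_succ_apply' V n p
  have hx_anti : Antitone fun n => (V^[n] p).1 := antitone_nat_of_succ_le fun n => by
    simpa only [hsucc] using seirV_fst_le hβ hq (hmem n)
  have hw_mono : Monotone fun n => (V^[n] p).2.2.2 := monotone_nat_of_le_succ fun n => by
    simpa only [hsucc] using le_seirV_snd_snd_snd hb.le (hmem n)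
  have hx_bdd : BddBelow (range fun n => (V^[n] p).1) := ⟨0, by
    rintro _ ⟨n, rfl⟩
    exact (hmem n).1⟩
  have hw_bdd : BddAbove (range fun n => (V^[n] p).2.2.2) := ⟨1, by
    rintro _ ⟨n, rfl⟩
    obtain ⟨hx, hy, hu, -, hsum⟩ := hmem n
    linarith⟩
  have hx_lim := tendsto_atTop_ciInf hx_anti hx_bdd
  have hw_lim := tendsto_atTop_ciSup hw_mono hw_bdd
  set xbar := ⨅ n, (V^[n] p).1
  have hu_lim : Tendsto (fun n => (V^[n] p).2.2.1) atTop (𝓝 0) := by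
    have := hw_lim.succ_sub.div_const b
    rw [zero_div] at this
    refine this.congr fun n => ?_
    simp only [hsucc, V, seirV]
    field_simp
    ring
  have hy_lim : Tendsto (fun n => (V^[n] p).2.1) atTop (𝓝 0) := by
    have := (hu_lim.succ_sub.add (hu_lim.const_mul b)).div_const a
    rw [mul_zero, add_zero, zero_div] at this
    refine this.congr fun n => ?_
    simp only [hsucc, V, seirV]
    field_simp
    ring
  have hw_lim' : Tendsto (fun n => (V^[n] p).2.2.2) atTop (𝓝 (1 - xbar)) := by
    have := ((tendsto_const_nhds (x := (1 : ℝ))).sub hx_lim).sub (hy_lim.add hu_lim)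
    rw [add_zero, sub_zero] at this
    refine this.congr fun n => ?_
    linarith [(hmem n).2.2.2.2]
  exact ⟨xbar, ciInf_le hx_bdd,
    hx_lim.prodMk_nhds (hy_lim.prodMk_nhds (hu_lim.prodMk_nhds hw_lim'))⟩

def seirLyapunov (b β c : ℝ) (p : ℝ × ℝ × ℝ × ℝ) : ℝ :=
  b * p.2.1 + β * c * p.2.2.1

theorem seirLyapunov_le_seirV {c : ℝ} (hb : 0 ≤ b) (hβ : 0 ≤ β) (hq : 0 ≤ q)
    (hp : p ∈ Simplex3) (hc : c ≤ p.1) (hcrit : a * b ≤ β * (a + b * q) * c) :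
    seirLyapunov b β c p ≤ seirLyapunov b β c (seirV a b β q p) := by
  obtain ⟨-, hy, hu, -⟩ := hp
  have hinfect : 0 ≤ b * β * (p.1 - c) * (p.2.2.1 + q * p.2.1) := by
    have := sub_nonneg.2 hc
    positivity
  have hrecover : 0 ≤ p.2.1 * (β * (a + b * q) * c - a * b) :=
    mul_nonneg hy (sub_nonneg.2 hcrit)
  -- the increment of the Lyapunov function is exactly `hinfect + hrecover`
  simp only [seirLyapunov, seirV]
  linarith

theorem lt_of_tendsto_iterate_seirV {xbar : ℝ} (ha : 0 < a) (hb : 0 < b) (hβ : 0 < β)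
    (hq : 0 ≤ q) (hmem : ∀ n, (seirV a b β q)^[n] p ∈ Simplex3)
    (hfix : seirV a b β q p ≠ p) (hlow : ∀ n, xbar ≤ ((seirV a b β q)^[n] p).1)
    (hlim : Tendsto (fun n => (seirV a b β q)^[n] p) atTop (𝓝 (xbar, 0, 0, 1 - xbar))) :
    xbar < a * b / (β * (a + b * q)) := by
  set V := seirV a b β q
  by_contra! hge
  have hden : 0 < β * (a + b * q) := by positivity
  have hcrit : a * b ≤ β * (a + b * q) * xbar := by rwa [div_le_iff₀' hden] at hge
  have hxbar : 0 < xbar := pos_of_mul_pos_right (hcrit.trans_lt' (by positivity)) hden.le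
  have hL_mono : Monotone fun n => seirLyapunov b β xbar (V^[n] p) :=
    monotone_nat_of_le_succ fun n => by
      simpa only [Function.iterate_succ_apply'] using
        seirLyapunov_le_seirV hb.le hβ.le hq (hmem n) (hlow n) hcrit
  have hL_lim : Tendsto (fun n => seirLyapunov b β xbar (V^[n] p)) atTop (𝓝 0) := by
    have hcont : Continuous (seirLyapunov b β xbar) := by
      unfold seirLyapunov
      fun_prop
    have hL_limit : seirLyapunov b β xbar (xbar, 0, 0, 1 - xbar) = 0 := by
      simp [seirLyapunov]
    exact hL_limit ▸ (hcont.tendsto _).comp hlim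
  have hL0 : seirLyapunov b β xbar p ≤ 0 := hL_mono.ge_of_tendsto hL_lim 0
  obtain ⟨-, hy, hu, -⟩ := hmem 0
  have hβx : 0 < β * xbar := mul_pos hβ hxbar
  simp only [seirLyapunov, Function.iterate_zero_apply] at hL0 hy hu
  exact hfix (seirV_eq_self (by nlinarith) (by nlinarith))

end SEIR

theorem stmt_18 (a b β q : ℝ) (ha : 0 < a) (ha1 : a ≤ 1) (hb : 0 < b) (hb1 : b ≤ 1)
    (hβ : 0 < β) (hβ1 : β ≤ 1) (hq : 0 ≤ q) (hβq : β * q ≤ 1)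
    (lam0 : ℝ × ℝ × ℝ × ℝ) (hlam : lam0 ∈ Simplex3)
    (hnotfix : seirV a b β q lam0 ≠ lam0) :
    ∃ xbar : ℝ, xbar < a * b / (β * (a + b * q)) ∧
      Filter.Tendsto (fun n => (seirV a b β q)^[n] lam0) Filter.atTop
        (nhds (xbar, 0, 0, 1 - xbar)) := by
  have hmem (n : ℕ) : (seirV a b β q)^[n] lam0 ∈ Simplex3 :=
    (seirV_mapsTo ha.le ha1 hb.le hb1 hβ.le hβ1 hq hβq).iterate n hlam
  obtain ⟨xbar, hlow, hlim⟩ := tendsto_iterate_seirV ha hb hβ.le hq hmem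
  exact ⟨xbar, lt_of_tendsto_iterate_seirV ha hb hβ hq hmem hnotfix hlow hlim, hlim⟩
end
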